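/- Let (A, δ, γ, α) be a cocommutative Hom-Poisson coalgebra and (M, Δ, Γ, β) a Hom-Poisson comodule over it. Then Δ̃ = (α²⊗Id_M)∘Δ and Γ̃ = (α²⊗Id_M)∘Γ are structure maps of another Hom-Poisson comodule structure on (M, β). -/

import Mathlib

/-!
Let φ commute with α and satisfy δ ∘ φ = (φ ⊗ φ) ∘ δ and γ ∘ φ = (φ ⊗ φ) ∘ γ. Twisting Δ and Γ
by φ ⊗ Id multiplies both sides of each comodule axiom by the same factor (φ ⊗ Id, or
φ ⊗ φ ⊗ Id, which commutes with the flip of the first two factors), so each axiom survives. Since δ and γ are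
multiplicative for α, they are multiplicative for φ = α² as well.
-/

open TensorProduct

/-- Flip on a tensor product. -/
noncomputable def tauT (K A B : Type*) [Field K] [AddCommGroup A] [Module K A]
    [AddCommGroup B] [Module K B] : A ⊗[K] B →ₗ[K] B ⊗[K] A :=
  (TensorProduct.comm K A B).toLinearMap

/-- Cyclic permutation x₁⊗x₂⊗x₃ ↦ x₃⊗x₁⊗x₂ on A⊗(A⊗A). -/
noncomputable def cyc (K A : Type*) [Field K] [AddCommGroup A] [Module K A] :
    A ⊗[K] (A ⊗[K] A) →ₗ[K] A ⊗[K] (A ⊗[K] A) :=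
  (TensorProduct.comm K (A ⊗[K] A) A).toLinearMap ∘ₗ
    (TensorProduct.assoc K A A A).symm.toLinearMap

/-- τ⊗Id acting on the first two factors of A⊗(A⊗M). -/
noncomputable def swap12 (K A M : Type*) [Field K] [AddCommGroup A] [Module K A]
    [AddCommGroup M] [Module K M] : A ⊗[K] (A ⊗[K] M) →ₗ[K] A ⊗[K] (A ⊗[K] M) :=
  (TensorProduct.assoc K A A M).toLinearMap ∘ₗ
    TensorProduct.map (tauT K A A) LinearMap.id ∘ₗ
      (TensorProduct.assoc K A A M).symm.toLinearMap

/-- Comodule over a Hom-coassociative coalgebra (C, δ, α). -/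
def IsHomComodule (K C M : Type*) [Field K] [AddCommGroup C] [Module K C]
    [AddCommGroup M] [Module K M] (δ : C →ₗ[K] C ⊗[K] C) (α : C →ₗ[K] C)
    (Δ : M →ₗ[K] C ⊗[K] M) (β : M →ₗ[K] M) : Prop :=
  Δ ∘ₗ β = TensorProduct.map α β ∘ₗ Δ ∧
  TensorProduct.map α Δ ∘ₗ Δ =
    (TensorProduct.assoc K C C M).toLinearMap ∘ₗ TensorProduct.map δ β ∘ₗ Δ

/-- Comodule over a Hom-Lie coalgebra (L, γ, α). -/
def IsHomLieComodule (K L M : Type*) [Field K] [AddCommGroup L] [Module K L]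
    [AddCommGroup M] [Module K M] (γ : L →ₗ[K] L ⊗[K] L) (α : L →ₗ[K] L)
    (Γ : M →ₗ[K] L ⊗[K] M) (β : M →ₗ[K] M) : Prop :=
  Γ ∘ₗ β = TensorProduct.map α β ∘ₗ Γ ∧
  (TensorProduct.assoc K L L M).toLinearMap ∘ₗ TensorProduct.map γ β ∘ₗ Γ =
    TensorProduct.map α Γ ∘ₗ Γ - swap12 K L M ∘ₗ TensorProduct.map α Γ ∘ₗ Γ

/-- Hom-Poisson comodule over (A, δ, γ, α). -/
def IsHomPoissonComodule (K A M : Type*) [Field K] [AddCommGroup A] [Module K A]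
    [AddCommGroup M] [Module K M] (δ γ : A →ₗ[K] A ⊗[K] A) (α : A →ₗ[K] A)
    (Δ Γ : M →ₗ[K] A ⊗[K] M) (β : M →ₗ[K] M) : Prop :=
  IsHomComodule K A M δ α Δ β ∧
  IsHomLieComodule K A M γ α Γ β ∧
  TensorProduct.map α Δ ∘ₗ Γ =
    (TensorProduct.assoc K A A M).toLinearMap ∘ₗ TensorProduct.map γ β ∘ₗ Δ +
      swap12 K A M ∘ₗ TensorProduct.map α Γ ∘ₗ Δ ∧
  (TensorProduct.assoc K A A M).toLinearMap ∘ₗ TensorProduct.map δ β ∘ₗ Γ =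
    TensorProduct.map α Γ ∘ₗ Δ + swap12 K A M ∘ₗ TensorProduct.map α Γ ∘ₗ Δ

/-- Cocommutative Hom-Poisson coalgebra. -/
def IsCocommHomPoissonCoalgebra (K A : Type*) [Field K] [AddCommGroup A] [Module K A]
    (δ γ : A →ₗ[K] A ⊗[K] A) (α : A →ₗ[K] A) : Prop :=
  δ = tauT K A A ∘ₗ δ ∧
  δ ∘ₗ α = TensorProduct.map α α ∘ₗ δ ∧
  TensorProduct.map α δ ∘ₗ δ =
    (TensorProduct.assoc K A A A).toLinearMap ∘ₗ TensorProduct.map δ α ∘ₗ δ ∧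
  γ = -(tauT K A A ∘ₗ γ) ∧
  γ ∘ₗ α = TensorProduct.map α α ∘ₗ γ ∧
  (LinearMap.id + cyc K A + cyc K A ∘ₗ cyc K A) ∘ₗ TensorProduct.map α γ ∘ₗ γ = 0 ∧
  TensorProduct.map α δ ∘ₗ γ =
    (TensorProduct.assoc K A A A).toLinearMap ∘ₗ TensorProduct.map γ α ∘ₗ δ +
      swap12 K A A ∘ₗ TensorProduct.map α γ ∘ₗ δ

section Twist

open LinearMap

variable {K A M : Type*} [Field K] [AddCommGroup A] [Module K A] [AddCommGroup M] [Module K M]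
  {α φ : A →ₗ[K] A}

lemma swap12_comp_map_map (f g : A →ₗ[K] A) (h : M →ₗ[K] M) :
    swap12 K A M ∘ₗ map f (map g h) = map g (map f h) ∘ₗ swap12 K A M := by
  ext a b m
  simp [swap12, tauT]

lemma map_twist_comp_twist (hφα : φ ∘ₗ α = α ∘ₗ φ) (Φ Ψ : M →ₗ[K] A ⊗[K] M) :
    map α (map φ id ∘ₗ Φ) ∘ₗ map φ id ∘ₗ Ψ = map φ (map φ id) ∘ₗ map α Φ ∘ₗ Ψ := by
  rw [← comp_assoc, ← comp_assoc, ← map_comp, ← map_comp, hφα, comp_id]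

lemma assoc_map_comp_twist {θ : A →ₗ[K] A ⊗[K] A} (hθφ : θ ∘ₗ φ = map φ φ ∘ₗ θ)
    (β : M →ₗ[K] M) (Ψ : M →ₗ[K] A ⊗[K] M) :
    (TensorProduct.assoc K A A M).toLinearMap ∘ₗ map θ β ∘ₗ map φ id ∘ₗ Ψ =
      map φ (map φ id) ∘ₗ (TensorProduct.assoc K A A M).toLinearMap ∘ₗ map θ β ∘ₗ Ψ := by
  have hθβ : map θ β ∘ₗ map φ id = map (map φ φ) id ∘ₗ map θ β := by
    rw [← map_comp, ← map_comp, hθφ, comp_id, id_comp]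
  rw [← comp_assoc Ψ (map φ id), hθβ, comp_assoc, ← comp_assoc (map θ β ∘ₗ Ψ),
    ← map_map_comp_assoc_eq]
  simp only [comp_assoc]

lemma twist_comp_swap12 (X : M →ₗ[K] A ⊗[K] (A ⊗[K] M)) :
    map φ (map φ id) ∘ₗ swap12 K A M ∘ₗ X = swap12 K A M ∘ₗ map φ (map φ id) ∘ₗ X := by
  rw [← comp_assoc, ← swap12_comp_map_map, comp_assoc]

lemma twist_comp_eq_map_comp_twist (hφα : φ ∘ₗ α = α ∘ₗ φ) {β : M →ₗ[K] M}
    {Ψ : M →ₗ[K] A ⊗[K] M} (h : Ψ ∘ₗ β = map α β ∘ₗ Ψ) :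
    (map φ id ∘ₗ Ψ) ∘ₗ β = map α β ∘ₗ map φ id ∘ₗ Ψ := by
  rw [comp_assoc, h, ← comp_assoc, ← comp_assoc, ← map_comp, ← map_comp, hφα, comp_id, id_comp]

variable {δ γ : A →ₗ[K] A ⊗[K] A} {Δ Γ : M →ₗ[K] A ⊗[K] M} {β : M →ₗ[K] M}

lemma IsHomComodule.twist (hφα : φ ∘ₗ α = α ∘ₗ φ) (hδφ : δ ∘ₗ φ = map φ φ ∘ₗ δ)
    (h : IsHomComodule K A M δ α Δ β) : IsHomComodule K A M δ α (map φ id ∘ₗ Δ) β :=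
  ⟨twist_comp_eq_map_comp_twist hφα h.1, by
    rw [map_twist_comp_twist hφα, h.2, assoc_map_comp_twist hδφ]⟩

lemma IsHomLieComodule.twist (hφα : φ ∘ₗ α = α ∘ₗ φ) (hγφ : γ ∘ₗ φ = map φ φ ∘ₗ γ)
    (h : IsHomLieComodule K A M γ α Γ β) : IsHomLieComodule K A M γ α (map φ id ∘ₗ Γ) β :=
  ⟨twist_comp_eq_map_comp_twist hφα h.1, by
    rw [assoc_map_comp_twist hγφ, h.2, comp_sub, map_twist_comp_twist hφα, twist_comp_swap12]⟩

lemma IsHomPoissonComodule.twist (hφα : φ ∘ₗ α = α ∘ₗ φ) (hδφ : δ ∘ₗ φ = map φ φ ∘ₗ δ)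
    (hγφ : γ ∘ₗ φ = map φ φ ∘ₗ γ) (h : IsHomPoissonComodule K A M δ γ α Δ Γ β) :
    IsHomPoissonComodule K A M δ γ α (map φ id ∘ₗ Δ) (map φ id ∘ₗ Γ) β := by
  obtain ⟨hΔ, hΓ, hΔΓ, hΓΔ⟩ := h
  refine ⟨hΔ.twist hφα hδφ, hΓ.twist hφα hγφ, ?_, ?_⟩
  · rw [map_twist_comp_twist hφα, hΔΓ, comp_add, assoc_map_comp_twist hγφ, twist_comp_swap12,
      map_twist_comp_twist hφα]
  · rw [assoc_map_comp_twist hδφ, hΓΔ, comp_add, map_twist_comp_twist hφα, twist_comp_swap12]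

lemma comp_sq_of_comp_eq {θ : A →ₗ[K] A ⊗[K] A} (h : θ ∘ₗ α = map α α ∘ₗ θ) :
    θ ∘ₗ (α ∘ₗ α) = map (α ∘ₗ α) (α ∘ₗ α) ∘ₗ θ := by
  rw [← comp_assoc, h, comp_assoc, h, ← comp_assoc, ← map_comp]

end Twist

theorem stmt18_general {K A M : Type*} [Field K] [AddCommGroup A] [Module K A]
    [AddCommGroup M] [Module K M]
    (δ γ : A →ₗ[K] A ⊗[K] A) (α : A →ₗ[K] A)
    (hA : IsCocommHomPoissonCoalgebra K A δ γ α)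
    (Δ Γ : M →ₗ[K] A ⊗[K] M) (β : M →ₗ[K] M)
    (hM : IsHomPoissonComodule K A M δ γ α Δ Γ β) :
    IsHomPoissonComodule K A M δ γ α
      (TensorProduct.map (α ∘ₗ α) LinearMap.id ∘ₗ Δ)
      (TensorProduct.map (α ∘ₗ α) LinearMap.id ∘ₗ Γ) β := by
  obtain ⟨-, hδα, -, -, hγα, -, -⟩ := hA
  exact hM.twist (LinearMap.comp_assoc α α α) (comp_sq_of_comp_eq hδα) (comp_sq_of_comp_eq hγα)

theorem stmt18 {K A M : Type*} [Field K] [CharZero K] [AddCommGroup A] [Module K A]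
    [AddCommGroup M] [Module K M]
    (δ γ : A →ₗ[K] A ⊗[K] A) (α : A →ₗ[K] A)
    (hA : IsCocommHomPoissonCoalgebra K A δ γ α)
    (Δ Γ : M →ₗ[K] A ⊗[K] M) (β : M →ₗ[K] M)
    (hM : IsHomPoissonComodule K A M δ γ α Δ Γ β) :
    IsHomPoissonComodule K A M δ γ α
      (TensorProduct.map (α ∘ₗ α) LinearMap.id ∘ₗ Δ)
      (TensorProduct.map (α ∘ₗ α) LinearMap.id ∘ₗ Γ) β :=
  stmt18_general δ γ α hA Δ Γ β hM
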